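/- Let B be a conic manifold, s > (n+1)/p, p ∈ (1,∞), γ ∈ ((n−3)/2, min{−1+√(((n−1)/2)²−λ₁), (n+1)/2}), and let Δ_s be the closed extension of the Laplacian in H^{s,γ}_p(B) with domain X₁^s = H^{s+2,γ+2}_p(B) ⊕ ℂ. Let η ∈ X₁^s satisfy c₁ ≤ η ≤ c₂ on B for some constants c₁, c₂ > 0. If ψ ∈ D(Δ_s) and η Δ_s ψ ∈ D(Δ_s), then ψ ∈ D(Δ_s²); that is, D((η Δ_s)²) ⊆ D(Δ_s²). -/

import Mathlib

noncomputable section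

open MeasureTheory Set
open scoped ENNReal NNReal

/-- An abstract model of a conic manifold `𝔹`: a smooth compact `(n+1)`-dimensional
manifold with closed boundary `∂𝔹`, endowed with a degenerate Riemannian metric
`g = dx² + x² h(x)` on a collar neighbourhood `[0,1) × ∂𝔹` of the boundary, together
with the scale of weighted Mellin–Sobolev spaces `H^{s,γ}_p(𝔹)` (realized inside the
functions on `𝔹`), the space `ℂ_𝔹` of smooth functions locally constant near the
boundary, a cut-off function `ω`, the Laplace–Beltrami operator `Δ`, and the spectrum
of the boundary Laplacian `Δ_{h(0)}` with its greatest non-zero eigenvalue `λ₁`. -/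
structure ConicSetting : Type 1 where
  /-- `dim 𝔹 = n + 1`. -/
  n : ℕ
  hn : 1 ≤ n
  /-- The points of `𝔹`. -/
  Bpt : Type
  /-- The points of the boundary (cross-section) `∂𝔹`. -/
  Bdy : Type
  topB : TopologicalSpace Bpt
  /-- Collar coordinates `(x,y) ∈ [0,1) × ∂𝔹` near the boundary. -/
  collar : ℝ → Bdy → Bpt
  /-- The interior `𝔹°`. -/
  interiorPt : Set Bpt
  collar_interior : ∀ x ∈ Set.Ioo (0:ℝ) 1, ∀ y, collar x y ∈ interiorPt
  collar_inj : ∀ x ∈ Set.Ioo (0:ℝ) 1, ∀ x' ∈ Set.Ioo (0:ℝ) 1, ∀ y y',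
    collar x y = collar x' y' → x = x' ∧ y = y'
  /-- The Mellin–Sobolev space `H^{s,γ}_p(𝔹)` (for smoothness `s`, weight `γ`,
  integrability `p`), realized as a subspace of the functions on `𝔹`. -/
  H : ℝ → ℝ → ℝ → Submodule ℂ (Bpt → ℂ)
  /-- The norm of `H^{s,γ}_p(𝔹)`. -/
  normH : ℝ → ℝ → ℝ → (Bpt → ℂ) → ℝ
  /-- The norm of `H^{σ,τ}_p(𝔹) ⊕ ℂ_𝔹`. -/
  normD : ℝ → ℝ → ℝ → (Bpt → ℂ) → ℝ
  /-- The smooth functions `C^∞(∂𝔹)` on the boundary. -/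
  SmoothBdy : Set (Bdy → ℂ)
  /-- The space `ℂ_𝔹` of smooth functions on `𝔹°` locally constant near the boundary. -/
  CcalB : Submodule ℂ (Bpt → ℂ)
  /-- The cut-off function `ω` near the boundary, depending only on `x` on the collar. -/
  cutoff : ℝ → ℝ
  cutoff_one : ∀ x ∈ Set.Icc (0:ℝ) (1/2), cutoff x = 1
  cutoff_zero : ∀ x : ℝ, 1 ≤ x → cutoff x = 0
  /-- The (negative) Laplace–Beltrami operator `Δ` of `g`, as a linear operator. -/
  Lap : (Bpt → ℂ) →ₗ[ℂ] (Bpt → ℂ)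
  /-- The set of eigenvalues of the boundary Laplacian `Δ_{h(0)}`. -/
  bSpec : Set ℝ
  /-- The greatest non-zero eigenvalue `λ₁` of `Δ_{h(0)}`. -/
  lam1 : ℝ
  lam1_neg : lam1 < 0
  lam1_mem : lam1 ∈ bSpec
  lam1_greatest : ∀ μ ∈ bSpec, μ ≠ 0 → μ ≤ lam1
  bSpec_nonpos : ∀ μ ∈ bSpec, μ ≤ 0
  bSpec_zero : (0:ℝ) ∈ bSpec
  /-- The proposition that the metric `h` in `g = dx² + x²h(x)` is independent of `x`
  close to `x = 0` (straight conical tips). -/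
  straight : Prop

namespace ConicSetting

variable (S : ConicSetting)

/-- The domain space `H^{σ,τ}_p(𝔹) ⊕ ℂ_𝔹`. -/
def Dspace (σ τ p : ℝ) : Submodule ℂ (S.Bpt → ℂ) := S.H σ τ p ⊔ S.CcalB

/-- `H^{σ,τ}_p(𝔹)` as a set. -/
def Hset (σ τ p : ℝ) : Set (S.Bpt → ℂ) := (S.H σ τ p : Set (S.Bpt → ℂ))

/-- `H^{σ,τ}_p(𝔹) ⊕ ℂ_𝔹` as a set. -/
def Dset (σ τ p : ℝ) : Set (S.Bpt → ℂ) := (S.Dspace σ τ p : Set (S.Bpt → ℂ))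

/-- Iterates of the Laplacian. -/
def LapIter (i : ℕ) (u : S.Bpt → ℂ) : S.Bpt → ℂ := (fun v => S.Lap v)^[i] u

/-- The domain `D(Δ_{s,min}^k)` of the `k`-th power of the minimal extension
`Δ_{s,min}` of `Δ` in `H^{s,γ}_p(𝔹)`, whose domain is `D(Δ_{s,min}) = H^{s+2,γ+2}_p(𝔹)`. -/
def domMinPow (s γ p : ℝ) (k : ℕ) : Set (S.Bpt → ℂ) :=
  {u | ∀ i < k, S.LapIter i u ∈ S.H (s+2) (γ+2) p}

/-- The domain `D(Δ_s^k)` of the `k`-th power of the closed extension `Δ_s` of `Δ` in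
`H^{s,γ}_p(𝔹)` with domain `D(Δ_s) = H^{s+2,γ+2}_p(𝔹) ⊕ ℂ_𝔹`. -/
def domPowL (s γ p : ℝ) (k : ℕ) : Set (S.Bpt → ℂ) :=
  {u | ∀ i < k, S.LapIter i u ∈ S.Dspace (s+2) (γ+2) p}

/-- The graph norm of `D(Δ_s²)` (all three summands measured in `H^{s,γ}_p`). -/
def normD2 (s γ p : ℝ) (u : S.Bpt → ℂ) : ℝ :=
  S.normH s γ p u + S.normH s γ p (S.Lap u) + S.normH s γ p (S.Lap (S.Lap u))

/-- The weight strip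
`S_k = {λ ∈ ℂ : Re(λ) ∈ [(n+1)/2 − γ − 2k, (n+1)/2 − γ − 2)}`. -/
def strip (γ : ℝ) (k : ℕ) : Set ℂ :=
  {lam | ((S.n : ℝ) + 1)/2 - γ - 2*(k:ℝ) ≤ lam.re ∧ lam.re < ((S.n : ℝ) + 1)/2 - γ - 2}

/-- The strip `{λ ∈ ℂ : Re(λ) ∈ [(n+1)/2 − γ − 2k, (n+1)/2 − γ − 2(k−1)]}`. -/
def stripV (γ : ℝ) (k : ℕ) : Set ℂ :=
  {lam | ((S.n : ℝ) + 1)/2 - γ - 2*(k:ℝ) ≤ lam.re ∧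
    lam.re ≤ ((S.n : ℝ) + 1)/2 - γ - 2*((k:ℝ) - 1)}

/-- The admissible weight interval
`γ ∈ ((n−3)/2, min{−1+√(((n−1)/2)² − λ₁), (n+1)/2})`. -/
def gammaOK (γ : ℝ) : Prop :=
  ((S.n : ℝ) - 3)/2 < γ ∧
    γ < min (-1 + Real.sqrt ((((S.n : ℝ) - 1)/2)^2 - S.lam1)) (((S.n : ℝ) + 1)/2)

/-- The admissible weight interval
`γ ∈ ((n−3)/2 + 2/q, min{−1+√(((n−1)/2)² − λ₁), (n+1)/2})`. -/
def gammaOKq (γ q : ℝ) : Prop :=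
  ((S.n : ℝ) - 3)/2 + 2/q < γ ∧
    γ < min (-1 + Real.sqrt ((((S.n : ℝ) - 1)/2)^2 - S.lam1)) (((S.n : ℝ) + 1)/2)

/-- `u` is the model asymptotics function which equals `ω(x) c(y) x^{−ρ} log^η(x)` in
local coordinates on the collar and vanishes outside the collar, with `c ∈ C^∞(∂𝔹)`. -/
def IsModelFn (ρ : ℂ) (η : ℕ) (c : S.Bdy → ℂ) (u : S.Bpt → ℂ) : Prop :=
  c ∈ S.SmoothBdy ∧
  (∀ x ∈ Set.Ioo (0:ℝ) 1, ∀ y, u (S.collar x y)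
    = (S.cutoff x : ℂ) * c y * (x : ℂ) ^ (-ρ) * (Real.log x : ℂ) ^ η) ∧
  (∀ z : S.Bpt, (∀ x ∈ Set.Ioo (0:ℝ) 1, ∀ y, z ≠ S.collar x y) → u z = 0)

/-- `Fk` consists of linear combinations of model asymptotics functions with exponents
`ρ ∈ Q` and logarithmic powers `η ≤ ord ρ`. -/
def IsAsympSpace (Q : Set ℂ) (ord : ℂ → ℕ) (Fk : Submodule ℂ (S.Bpt → ℂ)) : Prop :=
  ∃ gens : Set (S.Bpt → ℂ), Fk = Submodule.span ℂ gens ∧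
    ∀ u ∈ gens, ∃ ρ ∈ Q, ∃ η ≤ ord ρ, ∃ c : S.Bdy → ℂ, S.IsModelFn ρ η c u

/-- `Fk` consists of linear combinations of model asymptotics functions with exponents
`ρ ∈ Q` and arbitrary logarithmic integer powers. -/
def IsAsympSpaceAny (Q : Set ℂ) (Fk : Submodule ℂ (S.Bpt → ℂ)) : Prop :=
  ∃ gens : Set (S.Bpt → ℂ), Fk = Submodule.span ℂ gens ∧
    ∀ u ∈ gens, ∃ ρ ∈ Q, ∃ η : ℕ, ∃ c : S.Bdy → ℂ, S.IsModelFn ρ η c u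

/-- `D = A ⊕ B ⊕ C'` as subsets of the functions on `𝔹`: every element of `D` decomposes,
sums of elements of the three summands lie in `D`, and the decomposition is unique. -/
def IsTripleSum (D A B C' : Set (S.Bpt → ℂ)) : Prop :=
  (∀ u ∈ D, ∃ a ∈ A, ∃ b ∈ B, ∃ c ∈ C', u = a + b + c) ∧
  (∀ a ∈ A, ∀ b ∈ B, ∀ c ∈ C', a + b + c ∈ D) ∧
  (∀ a ∈ A, ∀ b ∈ B, ∀ c ∈ C', a + b + c = 0 → a = 0 ∧ b = 0 ∧ c = 0)

/-- The conormal symbol `σ_M(Δ^k)(λ)` restricted to the `μ`-eigenspace of `Δ_{h(0)}`,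
i.e. the polynomial `∏_{ν=0}^{k−1} ((λ+2ν)² − (n−1)(λ+2ν) + μ)`. -/
def conormalPoly (k : ℕ) (μ : ℝ) : Polynomial ℂ :=
  ∏ ν ∈ Finset.range k,
    ((Polynomial.X + Polynomial.C (2*(ν:ℂ)))^2
      - Polynomial.C ((S.n : ℂ) - 1) * (Polynomial.X + Polynomial.C (2*(ν:ℂ)))
      + Polynomial.C (μ : ℂ))

/-- The order `η_ρ` of `ρ` as a pole of `(σ_M(Δ^k)(·))⁻¹`, computed through the
eigenvalues of `Δ_{h(0)}` as the largest multiplicity of `ρ` as a root of the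
eigenvalue-wise conormal symbol polynomials. -/
def symbOrd (k : ℕ) (ρ : ℂ) : ℕ :=
  sSup {m : ℕ | ∃ μ ∈ S.bSpec, m = (S.conormalPoly k μ).rootMultiplicity ρ}

/-- The candidate exponent set
`{−2ν + (n−1)/2 ± √(((n−1)/2)² − λ_j) ∈ S_k : λ_j ∈ σ(Δ_{h(0)}), ν ∈ {0,…,k−1}}`. -/
def candSet (γ : ℝ) (k : ℕ) : Set ℂ :=
  {ρ | ρ ∈ S.strip γ k ∧ ∃ μ ∈ S.bSpec, ∃ ν < k,
    ρ = ((-(2*(ν:ℝ)) + ((S.n : ℝ) - 1)/2 + Real.sqrt ((((S.n : ℝ) - 1)/2)^2 - μ) : ℝ) : ℂ) ∨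
    ρ = ((-(2*(ν:ℝ)) + ((S.n : ℝ) - 1)/2 - Real.sqrt ((((S.n : ℝ) - 1)/2)^2 - μ) : ℝ) : ℂ)}

/-- The sup-norm of `C(𝔹)`. -/
def normC0 (u : S.Bpt → ℂ) : ℝ := ⨆ z : S.Bpt, ‖u z‖

/-- `f t ∈ V` with `t ↦ f t` continuous on `I` for the norm `nrm`. -/
def MemCOn (V : Set (S.Bpt → ℂ)) (nrm : (S.Bpt → ℂ) → ℝ) (I : Set ℝ)
    (f : ℝ → S.Bpt → ℂ) : Prop :=
  (∀ t ∈ I, f t ∈ V) ∧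
  ∀ t ∈ I, ∀ ε > (0:ℝ), ∃ δ > (0:ℝ), ∀ t' ∈ I, |t' - t| < δ → nrm (f t' - f t) < ε

/-- `f` has derivative `f' t` at `t` (within `I`) with respect to the norm `nrm`. -/
def HasNDerivAt (nrm : (S.Bpt → ℂ) → ℝ) (I : Set ℝ) (f f' : ℝ → S.Bpt → ℂ)
    (t : ℝ) : Prop :=
  ∀ ε > (0:ℝ), ∃ δ > (0:ℝ), ∀ h : ℝ, h ≠ 0 → |h| < δ → t + h ∈ I →
    nrm (((h : ℂ)⁻¹) • (f (t + h) - f t) - f' t) < ε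

/-- `f ∈ C^k(I; (V,nrm))`. -/
def MemCkOn (V : Set (S.Bpt → ℂ)) (nrm : (S.Bpt → ℂ) → ℝ) (I : Set ℝ) (k : ℕ)
    (f : ℝ → S.Bpt → ℂ) : Prop :=
  ∃ D : ℕ → ℝ → S.Bpt → ℂ, D 0 = f ∧
    (∀ j < k, ∀ t ∈ I, S.HasNDerivAt nrm I (D j) (D (j+1)) t) ∧
    (∀ j ≤ k, S.MemCOn V nrm I (D j))

/-- `f ∈ C^α(I; (V,nrm))` (Hölder continuity of exponent `α`). -/
def MemHolderOn (V : Set (S.Bpt → ℂ)) (nrm : (S.Bpt → ℂ) → ℝ) (I : Set ℝ) (α : ℝ)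
    (f : ℝ → S.Bpt → ℂ) : Prop :=
  (∀ t ∈ I, f t ∈ V) ∧
  ∃ Cst : ℝ, ∀ t ∈ I, ∀ t' ∈ I, nrm (f t - f t') ≤ Cst * |t - t'| ^ α

/-- `f ∈ C^{1+α}(I; (V,nrm))`: `f ∈ C¹` and `f' ∈ C^α`. -/
def MemC1HolderOn (V : Set (S.Bpt → ℂ)) (nrm : (S.Bpt → ℂ) → ℝ) (I : Set ℝ) (α : ℝ)
    (f : ℝ → S.Bpt → ℂ) : Prop :=
  ∃ f' : ℝ → S.Bpt → ℂ, (∀ t ∈ I, S.HasNDerivAt nrm I f f' t) ∧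
    S.MemCOn V nrm I f ∧ S.MemCOn V nrm I f' ∧ S.MemHolderOn V nrm I α f'

/-- `f ∈ L^q(a,b; (V,nrm))`. -/
def MemLqOn (V : Set (S.Bpt → ℂ)) (nrm : (S.Bpt → ℂ) → ℝ) (a b q : ℝ)
    (f : ℝ → S.Bpt → ℂ) : Prop :=
  (∀ t ∈ Set.Ioc a b, f t ∈ V) ∧
  MeasureTheory.IntegrableOn (fun t => nrm (f t) ^ q) (Set.Ioc a b)

/-- The norm of `L^q(a,b; (V,nrm))`. -/
def LqNormOn (nrm : (S.Bpt → ℂ) → ℝ) (a b q : ℝ) (f : ℝ → S.Bpt → ℂ) : ℝ :=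
  (∫ t in Set.Ioc a b, nrm (f t) ^ q) ^ (1/q)

/-- The `K`-functional of a couple of subspaces of functions on `𝔹`, with respect to the
norms `n₁` (on `V₁`) and `n₀` (ambient). -/
def KfnSp (V₁ : Set (S.Bpt → ℂ)) (n₁ n₀ : (S.Bpt → ℂ) → ℝ) (t : ℝ)
    (u : S.Bpt → ℂ) : ℝ :=
  sInf {r : ℝ | ∃ a ∈ V₁, r = n₁ a + t * n₀ (u - a)}

/-- The norm of the real interpolation space `(V₁, V₀)_{φ,q}`. -/
def interpNormSp (V₁ : Set (S.Bpt → ℂ)) (n₁ n₀ : (S.Bpt → ℂ) → ℝ) (φ q : ℝ)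
    (u : S.Bpt → ℂ) : ℝ≥0∞ :=
  (∫⁻ t in Set.Ioi (0:ℝ),
    ENNReal.ofReal ((t ^ (-φ) * S.KfnSp V₁ n₁ n₀ t u) ^ q / t)) ^ (1/q)

/-- The real interpolation space `(V₁, V₀)_{φ,q}` of a couple of subspaces. -/
def interpSp (V₁ : Set (S.Bpt → ℂ)) (n₁ n₀ : (S.Bpt → ℂ) → ℝ) (φ q : ℝ) :
    Set (S.Bpt → ℂ) :=
  {u | S.interpNormSp V₁ n₁ n₀ φ q u < ⊤}

/-- The real-valued interpolation norm. -/
def interpNormSpR (V₁ : Set (S.Bpt → ℂ)) (n₁ n₀ : (S.Bpt → ℂ) → ℝ) (φ q : ℝ)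
    (u : S.Bpt → ℂ) : ℝ :=
  (S.interpNormSp V₁ n₁ n₀ φ q u).toReal

/-- `v ∈ C^∞(I; D(Δ_s^k))`: all time-derivatives (taken in `H^{s,γ}_p`) exist and take
values in `D(Δ_s^k)`. -/
def SmoothIntoDomL (s γ p : ℝ) (k : ℕ) (I : Set ℝ) (v : ℝ → S.Bpt → ℂ) : Prop :=
  ∃ D : ℕ → ℝ → S.Bpt → ℂ, D 0 = v ∧
    (∀ j : ℕ, ∀ t ∈ I, S.HasNDerivAt (S.normH s γ p) I (D j) (D (j+1)) t) ∧
    (∀ j : ℕ, ∀ t ∈ I, D j t ∈ S.domPowL s γ p k)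

/-- The pointwise complex power `u ↦ u^m`. -/
def cpowFn (m : ℝ) (u : S.Bpt → ℂ) : S.Bpt → ℂ := fun z => u z ^ (m : ℂ)

/-- `u` is real-valued with `c₁ ≤ u ≤ c₂` on `𝔹`. -/
def IsRealBetween (c₁ c₂ : ℝ) (u : S.Bpt → ℂ) : Prop :=
  ∀ z, (u z).im = 0 ∧ c₁ ≤ (u z).re ∧ (u z).re ≤ c₂

end ConicSetting

/-!
Since `η` is bounded below by a positive constant, holomorphic functional calculus puts
`η⁻¹` in the algebra `X₁^s`; then `Δ_s ψ = η⁻¹ · (η Δ_s ψ)` is a product of two elements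
of `X₁^s`, so `Δ_s ψ ∈ D(Δ_s)`.
-/

lemma mem_of_mul_mem_of_inv_mem {α G : Type*} [GroupWithZero G] {D : Set (α → G)}
    (hmulD : ∀ u v, u ∈ D → v ∈ D → u * v ∈ D) {η v : α → G}
    (hη : ∀ z, η z ≠ 0) (hηinv : (fun z => (η z)⁻¹) ∈ D) (hv : η * v ∈ D) : v ∈ D := by
  have hcancel : (fun z => (η z)⁻¹) * (η * v) = v :=
    funext fun z => inv_mul_cancel_left₀ (hη z) (v z)
  simpa only [hcancel] using hmulD _ _ hηinv hv

namespace ConicSetting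

lemma IsRealBetween.ne_zero {S : ConicSetting} {c₁ c₂ : ℝ} {u : S.Bpt → ℂ}
    (hc₁ : 0 < c₁) (hu : S.IsRealBetween c₁ c₂ u) (z : S.Bpt) : u z ≠ 0 := by
  intro h
  have hlower := (hu z).2.1
  rw [h, Complex.zero_re] at hlower
  linarith

lemma mem_domPowL_two_iff (S : ConicSetting) {s γ p : ℝ} {u : S.Bpt → ℂ} :
    u ∈ S.domPowL s γ p 2 ↔ u ∈ S.Dset (s+2) (γ+2) p ∧ S.Lap u ∈ S.Dset (s+2) (γ+2) p := by
  simp only [domPowL, Set.mem_ofPred_eq, Nat.lt_succ_iff, Nat.le_one_iff_eq_zero_or_eq_one]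
  constructor
  · intro h
    exact ⟨h 0 (Or.inl rfl), h 1 (Or.inr rfl)⟩
  · rintro ⟨h₀, h₁⟩ i (rfl | rfl)
    exacts [h₀, h₁]

end ConicSetting

open ConicSetting in
theorem bilaplacian_domain_of_multiplied_domain_general (S : ConicSetting) (s γ p : ℝ)
    -- `X₁^s` is a Banach algebra ...
    (halg : ∀ u v : S.Bpt → ℂ, u ∈ S.Dset (s+2) (γ+2) p → v ∈ S.Dset (s+2) (γ+2) p →
      u * v ∈ S.Dset (s+2) (γ+2) p)
    -- ... closed under holomorphic functional calculus (reciprocals of positive elements)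
    (hinv : ∀ u : S.Bpt → ℂ, u ∈ S.Dset (s+2) (γ+2) p →
      (∃ c₁ c₂ : ℝ, 0 < c₁ ∧ S.IsRealBetween c₁ c₂ u) →
      (fun z => (u z)⁻¹) ∈ S.Dset (s+2) (γ+2) p)
    (η : S.Bpt → ℂ) (hη : η ∈ S.Dset (s+2) (γ+2) p)
    (c₁ c₂ : ℝ) (hc₁ : 0 < c₁) (hbetween : S.IsRealBetween c₁ c₂ η)
    (ψ : S.Bpt → ℂ) (hψ : ψ ∈ S.Dset (s+2) (γ+2) p)
    (hmul : η * S.Lap ψ ∈ S.Dset (s+2) (γ+2) p) :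
    ψ ∈ S.domPowL s γ p 2 :=
  S.mem_domPowL_two_iff.2 ⟨hψ, mem_of_mul_mem_of_inv_mem halg (hbetween.ne_zero hc₁)
    (hinv η hη ⟨c₁, c₂, hc₁, hbetween⟩) hmul⟩

open ConicSetting in
/-- **Multiplication and the bi-Laplacian domain.**
Let `s > (n+1)/p`, `p ∈ (1,∞)`, `γ ∈ ((n−3)/2, min{−1+√(((n−1)/2)²−λ₁), (n+1)/2})` and
let `Δ_s` be the closed extension of the Laplacian in `H^{s,γ}_p(𝔹)` with domain
`X₁^s = H^{s+2,γ+2}_p(𝔹) ⊕ ℂ_𝔹`.  (Recall from [RS4, Lemma 2.5] that `X₁^s` is then a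
Banach algebra, closed under holomorphic functional calculus: both facts appear below as
hypotheses.)  Let `η ∈ X₁^s` satisfy `c₁ ≤ η ≤ c₂` on `𝔹` for some constants
`c₁, c₂ > 0`.  If `ψ ∈ D(Δ_s)` and `η Δ_s ψ ∈ D(Δ_s)`, then `ψ ∈ D(Δ_s²)`; that is,
`D((η Δ_s)²) ⊆ D(Δ_s²)`. -/
theorem bilaplacian_domain_of_multiplied_domain (S : ConicSetting) (s γ p : ℝ)
    (hp : 1 < p) (hs : ((S.n : ℝ) + 1)/p < s) (hγ : S.gammaOK γ)
    -- `X₁^s` is a Banach algebra ...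
    (halg : ∀ u v : S.Bpt → ℂ, u ∈ S.Dset (s+2) (γ+2) p → v ∈ S.Dset (s+2) (γ+2) p →
      u * v ∈ S.Dset (s+2) (γ+2) p)
    -- ... closed under holomorphic functional calculus (reciprocals of positive elements)
    (hinv : ∀ u : S.Bpt → ℂ, u ∈ S.Dset (s+2) (γ+2) p →
      (∃ c₁ c₂ : ℝ, 0 < c₁ ∧ S.IsRealBetween c₁ c₂ u) →
      (fun z => (u z)⁻¹) ∈ S.Dset (s+2) (γ+2) p)
    (η : S.Bpt → ℂ) (hη : η ∈ S.Dset (s+2) (γ+2) p)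
    (c₁ c₂ : ℝ) (hc₁ : 0 < c₁) (hbetween : S.IsRealBetween c₁ c₂ η)
    (ψ : S.Bpt → ℂ) (hψ : ψ ∈ S.Dset (s+2) (γ+2) p)
    (hmul : η * S.Lap ψ ∈ S.Dset (s+2) (γ+2) p) :
    ψ ∈ S.domPowL s γ p 2 :=
  bilaplacian_domain_of_multiplied_domain_general S s γ p halg hinv η hη c₁ c₂ hc₁ hbetween ψ hψ
    hmul
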